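/- For any k ∈ ℕ∖{0}, the minimum depth of a nondeterministic decision tree for the table T_k satisfies h^a(T_k) ≤ 3. -/

import Mathlib

open Classical

noncomputable section

/-- A decision table with many-valued decisions over `E_k = {0,…,k-1}`.
Columns are labeled with attributes `f_i` identified with their indices `i : ℕ`;
a row is a function `ℕ → ℕ` supported on the attribute set, with values `< k`;
each row is labeled with a nonempty finite set of decisions. -/
structure Table (k : ℕ) where
  attrs : Finset ℕ
  rows : Finset (ℕ → ℕ)
  dec : (ℕ → ℕ) → Finset ℕ
  rows_mem : ∀ r ∈ rows, (∀ i ∈ attrs, r i < k) ∧ (∀ i ∉ attrs, r i = 0)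
  dec_nonempty : ∀ r ∈ rows, (dec r).Nonempty

namespace Table

variable {k : ℕ}

/-- a row satisfies a word (a list of (attribute, value) pairs) -/
def rowSat (r : ℕ → ℕ) (α : List (ℕ × ℕ)) : Prop := ∀ q ∈ α, r q.1 = q.2

/-- the word belongs to `Ω_k(T)` -/
def wordOk (T : Table k) (α : List (ℕ × ℕ)) : Prop := ∀ q ∈ α, q.1 ∈ T.attrs ∧ q.2 < k

/-- the subtable `Tα` -/
def applyWord (T : Table k) (α : List (ℕ × ℕ)) : Table k where
  attrs := T.attrs
  rows := T.rows.filter (fun r => rowSat r α)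
  dec := T.dec
  rows_mem := fun r hr => T.rows_mem r (Finset.mem_filter.mp hr).1
  dec_nonempty := fun r hr => T.dec_nonempty r (Finset.mem_filter.mp hr).1

/-- `T ∈ M_k^{∞c}` : the table has a common decision -/
def hasCommon (T : Table k) : Prop := ∃ d : ℕ, ∀ r ∈ T.rows, d ∈ T.dec r

/-- `N(T)` : number of rows -/
def NT (T : Table k) : ℕ := T.rows.card

/-- `W(T)` : number of columns (`0` for the empty table `Λ`) -/
def WT (T : Table k) : ℕ := if T.rows = ∅ then 0 else T.attrs.card

/-- the closure `[T]` of `T` under removal of columns and changing of decisions: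
`Q = J(ν, I(D,T))` for some `D ⊆ At(T)` and some `ν` (the decision labeling of `Q`
on its rows is arbitrary, i.e. is the arbitrary `ν` with nonempty finite values). -/
def closureT (T : Table k) : Set (Table k) :=
  {Q | ∃ D : Finset ℕ, D ⊆ T.attrs ∧ Q.attrs = T.attrs \ D ∧
      Q.rows = T.rows.image (fun r i => if i ∈ T.attrs \ D then r i else 0)}

end Table

/-- a closed class: `[A] = A` -/
def IsClosedClass {k : ℕ} (A : Set (Table k)) : Prop := ∀ T ∈ A, Table.closureT T ⊆ A

/-- a nontrivial class: contains nonempty tables -/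
def NontrivialClass {k : ℕ} (A : Set (Table k)) : Prop := ∃ T ∈ A, T.rows.Nonempty

/-- the part of a `k`-decision tree below one edge leaving the root -/
inductive DTree (k : ℕ) : Type
  | leaf (d : ℕ) : DTree k
  | node (a : ℕ) (n : ℕ) (lab : Fin (n + 1) → ℕ) (ch : Fin (n + 1) → DTree k) : DTree k

namespace DTree

variable {k : ℕ}

/-- the set of pairs (π(τ), terminal decision) over complete paths τ -/
def paths : DTree k → Set (List (ℕ × ℕ) × ℕ)
  | leaf d => {([], d)}
  | node a _ lab ch =>
      ⋃ i, (fun p : List (ℕ × ℕ) × ℕ => ((a, lab i) :: p.1, p.2)) '' paths (ch i)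

/-- edge labels belong to `E_k` -/
def wf : DTree k → Prop
  | leaf _ => True
  | node _ _ lab ch => (∀ i, lab i < k) ∧ ∀ i, wf (ch i)

/-- edges leaving any node are labeled with pairwise different numbers -/
def det : DTree k → Prop
  | leaf _ => True
  | node _ _ lab ch => Function.Injective lab ∧ ∀ i, det (ch i)

/-- the set of attributes attached to nodes -/
def attrs : DTree k → Finset ℕ
  | leaf _ => ∅
  | node a _ _ ch => insert a (Finset.univ.biUnion fun i => attrs (ch i))

end DTree

/-- a `k`-decision tree: an unlabeled root with `n+1` unlabeled edges leaving it -/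
structure KTree (k : ℕ) where
  n : ℕ
  sub : Fin (n + 1) → DTree k

namespace KTree

variable {k : ℕ}

def paths (Γ : KTree k) : Set (List (ℕ × ℕ) × ℕ) := ⋃ i, (Γ.sub i).paths

def wf (Γ : KTree k) : Prop := ∀ i, (Γ.sub i).wf

def attrs (Γ : KTree k) : Finset ℕ := Finset.univ.biUnion fun i => (Γ.sub i).attrs

end KTree

/-- partially bounded complexity measure on words over `P` -/
structure PBCM where
  toFun : List ℕ → ℕ
  pos : ∀ α, toFun α = 0 ↔ α = []
  perm : ∀ α β, List.Perm α β → toFun α = toFun β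
  mono : ∀ α β, toFun α ≤ toFun (α ++ β)
  subadd : ∀ α β, toFun (α ++ β) ≤ toFun α + toFun β

/-- bounded complexity measure -/
structure BCM extends PBCM where
  bdd : ∀ α, α.length ≤ toFun α

/-- extension of ψ to words over pairs `(f_i, δ)` -/
def PBCM.onWord (ψ : PBCM) (α : List (ℕ × ℕ)) : ℕ := ψ.toFun (α.map Prod.fst)

/-- extension of ψ to finite sets of attributes -/
def PBCM.onSet (ψ : PBCM) (s : Finset ℕ) : ℕ := ψ.toFun (s.sort (· ≤ ·))

/-- the depth `h` -/
def depthCM : BCM where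
  toFun := List.length
  pos := fun α => List.length_eq_zero_iff
  perm := fun _ _ h => h.length_eq
  mono := fun α β => by simp
  subadd := fun α β => by simp
  bdd := fun _ => le_rfl

/-- `ψ(Γ)` : complexity of a decision tree -/
def treeComp {k : ℕ} (ψ : PBCM) (Γ : KTree k) : ℕ :=
  sSup {c | ∃ p ∈ Γ.paths, ψ.onWord p.1 = c}

/-- `Γ` is a nondeterministic decision tree for the (nonempty) table `T` -/
def isNDT {k : ℕ} (T : Table k) (Γ : KTree k) : Prop :=
  T.rows.Nonempty ∧ Γ.wf ∧ Γ.attrs ⊆ T.attrs ∧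
  (∀ r ∈ T.rows, ∃ p ∈ Γ.paths, Table.rowSat r p.1) ∧
  (∀ p ∈ Γ.paths, (T.applyWord p.1).rows = ∅ ∨ ∀ r ∈ (T.applyWord p.1).rows, p.2 ∈ T.dec r)

/-- `Γ` is a deterministic decision tree for `T` -/
def isDDT {k : ℕ} (T : Table k) (Γ : KTree k) : Prop :=
  isNDT T Γ ∧ Γ.n = 0 ∧ ∀ i, (Γ.sub i).det

/-- `ψ^a(T)` -/
def psiA {k : ℕ} (ψ : PBCM) (T : Table k) : ℕ :=
  sInf {c | ∃ Γ : KTree k, isNDT T Γ ∧ treeComp ψ Γ = c}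

/-- `ψ^d(T)` -/
def psiD {k : ℕ} (ψ : PBCM) (T : Table k) : ℕ :=
  sInf {c | ∃ Γ : KTree k, isDDT T Γ ∧ treeComp ψ Γ = c}

/-- `m_ψ(T)` -/
def mpsi {k : ℕ} (ψ : PBCM) (T : Table k) : ℕ :=
  if T.rows = ∅ then 0 else T.attrs.sup fun i => ψ.toFun [i]

/-- `W_ψ(T)` -/
def Wpsi {k : ℕ} (ψ : PBCM) (T : Table k) : ℕ :=
  if T.rows = ∅ then 0 else ψ.onSet T.attrs

/-- a tuple `δ̄ ∈ E_k^{|At(T)|}` -/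
def validTuple {k : ℕ} (T : Table k) (δ : ℕ → ℕ) : Prop :=
  (∀ i ∈ T.attrs, δ i < k) ∧ ∀ i ∉ T.attrs, δ i = 0

/-- `M_ψ(T, δ̄)` -/
def MpsiAt {k : ℕ} (ψ : PBCM) (T : Table k) (δ : ℕ → ℕ) : ℕ :=
  sInf {p | ∃ s : Finset ℕ, s ⊆ T.attrs ∧
    (T.applyWord ((s.sort (· ≤ ·)).map fun i => (i, δ i))).hasCommon ∧ ψ.onSet s = p}

/-- `M_ψ(T)` -/
def Mpsi {k : ℕ} (ψ : PBCM) (T : Table k) : ℕ :=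
  if T.hasCommon then 0 else sSup {p | ∃ δ, validTuple T δ ∧ MpsiAt ψ T δ = p}

/-- `U` is a `(ψ,n)`-cover of `T` -/
def isCover {k : ℕ} (ψ : PBCM) (n : ℕ) (T : Table k) (U : Finset (List (ℕ × ℕ))) : Prop :=
  (∀ α ∈ U, T.wordOk α ∧ ψ.onWord α ≤ n) ∧ ∀ r ∈ T.rows, ∃ α ∈ U, Table.rowSat r α

/-- `U` is an irreducible `(ψ,n)`-cover of `T` -/
def isIrredCover {k : ℕ} (ψ : PBCM) (n : ℕ) (T : Table k) (U : Finset (List (ℕ × ℕ))) : Prop :=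
  isCover ψ n T U ∧ ∀ V ⊂ U, ¬ isCover ψ n T V

/-- `l_ψ(T,n)` : maximum cardinality of an irreducible `(ψ,n)`-cover -/
def lpsi {k : ℕ} (ψ : PBCM) (T : Table k) (n : ℕ) : ℕ :=
  sSup {c | ∃ U, isIrredCover ψ n T U ∧ U.card = c}

/-- the set `{ψ^d(T) : T ∈ A, ψ^a(T) ≤ n}`; `H^∞_{ψ,A}(n)` is defined iff this set
is finite, and is then its maximum -/
def HSet {k : ℕ} (ψ : PBCM) (A : Set (Table k)) (n : ℕ) : Set ℕ :=
  {c | ∃ T ∈ A, psiA ψ T ≤ n ∧ psiD ψ T = c}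

/-- `H^∞_{ψ,A}(n)` (as the max = sSup of the finite set `HSet ψ A n`) -/
def Hfun {k : ℕ} (ψ : PBCM) (A : Set (Table k)) (n : ℕ) : ℕ := sSup (HSet ψ A n)

/-- the set `{l_ψ(T,n) : T ∈ A}` -/
def LSet {k : ℕ} (ψ : PBCM) (A : Set (Table k)) (n : ℕ) : Set ℕ :=
  {c | ∃ T ∈ A, lpsi ψ T n = c}

/-- `L_{ψ,A}(n)` -/
def Lfun {k : ℕ} (ψ : PBCM) (A : Set (Table k)) (n : ℕ) : ℕ := sSup (LSet ψ A n)

/-- `H_D` for an infinite `D ⊆ ℕ` : `H_D(n)` is the largest element of `D` that is `≤ n`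
(and `0` if there is none) -/
def HDfun (D : Set ℕ) (n : ℕ) : ℕ := sSup {d | d ∈ D ∧ d ≤ n}

/-- a complete table from `M_2^∞` -/
def isComplete (Q : Table 2) : Prop := Q.NT = 2 ^ Q.attrs.card

/-- `Z(T)` : maximum number of columns in a complete table from `[T]` (`0` if none) -/
def Zt (T : Table 2) : ℕ := sSup {c | ∃ Q ∈ Table.closureT T, isComplete Q ∧ Q.WT = c}

/-- the set `{Z(T) : T ∈ A_ψ(n)}` -/
def ZSet (ψ : PBCM) (A : Set (Table 2)) (n : ℕ) : Set ℕ :=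
  {c | ∃ T ∈ A, mpsi ψ T ≤ n ∧ Zt T = c}

/-- `Z_{ψ,A}(n)` -/
def Zfun (ψ : PBCM) (A : Set (Table 2)) (n : ℕ) : ℕ := sSup (ZSet ψ A n)

/-- annihilating word for `T` -/
def isAnnih (T : Table 2) (α : List (ℕ × ℕ)) : Prop :=
  T.wordOk α ∧ (∀ p ∈ α, ∀ q ∈ α, p.1 = q.1 → p.2 = q.2) ∧ (T.applyWord α).rows = ∅

/-- irreducible annihilating word for `T` -/
def isIrredAnnih (T : Table 2) (α : List (ℕ × ℕ)) : Prop :=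
  isAnnih T α ∧ ∀ β, β.Sublist α → β ≠ α → ¬ isAnnih T β

/-- `G(T)` : maximum length of an irreducible annihilating word (`0` if none) -/
def Gt (T : Table 2) : ℕ := sSup {c | ∃ α, isIrredAnnih T α ∧ α.length = c}

/-- the set `{G(T) : T ∈ A_ψ(n)}` -/
def GSet (ψ : PBCM) (A : Set (Table 2)) (n : ℕ) : Set ℕ :=
  {c | ∃ T ∈ A, mpsi ψ T ≤ n ∧ Gt T = c}

/-- `G_{ψ,A}(n)` -/
def Gfun (ψ : PBCM) (A : Set (Table 2)) (n : ℕ) : ℕ := sSup (GSet ψ A n)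

/-! ### The tables `T_k` and `T_k^*` built from the triangle-shaped graph `G_k` -/

/-- `m(k) = k(k+1)/2` : number of nodes of `G_k` -/
def mnum (k : ℕ) : ℕ := k * (k + 1) / 2

/-- the layer of node `i` of `G_k` : the unique `L` with `m(L-1) < i ≤ m(L)` -/
def layer (i : ℕ) : ℕ := sInf {L | i ≤ mnum L}

/-- left child `l(i) = i + layer i`; right child `p(i) = i + layer i + 1` -/
def lchild (i : ℕ) : ℕ := i + layer i

def rchild (i : ℕ) : ℕ := i + layer i + 1

/-- the map `ν_k : E_2^{m(k)} → P(ω)` -/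
def nuk (k : ℕ) (δ : ℕ → ℕ) : Finset ℕ :=
  (Finset.range (mnum k + 1)).filter fun i =>
    if i = 0 then δ 1 = 0
    else if layer i = k then δ i = 1
    else δ i = 1 ∧ δ (lchild i) = 0 ∧ δ (rchild i) = 0

/-- all tuples over `E_k` supported on the attribute set `s` -/
def allRows (k : ℕ) (s : Finset ℕ) : Finset (ℕ → ℕ) :=
  (s.pi fun _ => Finset.range k).image fun f i => if h : i ∈ s then f i h else 0

/-- the table with attribute set `s`, all possible rows, and decision labeling `d` -/
def fullTable (k : ℕ) (s : Finset ℕ) (d : (ℕ → ℕ) → Finset ℕ) : Table k where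
  attrs := s
  rows := allRows k s
  dec := fun r => if (d r).Nonempty then d r else {0}
  rows_mem := by
    intro r hr
    simp only [allRows, Finset.mem_image] at hr
    obtain ⟨f, hf, rfl⟩ := hr
    refine ⟨fun i hi => ?_, fun i hi => ?_⟩
    · have h := (Finset.mem_pi.mp hf) i hi
      simp only [Finset.mem_range] at h
      simpa [hi] using h
    · simp [hi]
  dec_nonempty := by
    intro r _
    by_cases h : (d r).Nonempty
    · simp [h]
    · simp [h]

/-- the complete table `T_k` with `m(k)` columns `f_1, …, f_{m(k)}` and `2^{m(k)}` rows,
each row `δ̄` labeled with `ν_k(δ̄)` (which is always nonempty) -/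
def Tk (k : ℕ) : Table 2 := fullTable 2 (Finset.Icc 1 (mnum k)) (nuk k)

/-- the `j`-th node of the complete path of `G_k` determined by the choices `c` -/
def pathNode (c : ℕ → Bool) : ℕ → ℕ
  | 0 => 1
  | j + 1 => if c j then lchild (pathNode c j) else rchild (pathNode c j)

/-- `T_k^*` : the subtable of `T_k` whose rows are exactly the characteristic tuples
of complete paths of `G_k` -/
def Tstar (k : ℕ) : Table 2 where
  attrs := (Tk k).attrs
  rows := (Tk k).rows.filter fun r =>
    ∃ c : ℕ → Bool, ∀ i ∈ Finset.Icc 1 (mnum k), (r i = 1 ↔ ∃ j < k, pathNode c j = i)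
  dec := (Tk k).dec
  rows_mem := fun r hr => (Tk k).rows_mem r (Finset.mem_filter.mp hr).1
  dec_nonempty := fun r hr => (Tk k).dec_nonempty r (Finset.mem_filter.mp hr).1

/-- `r(T)` for a subtable `T` of `T_k^*` : the number of distinct decision sets
`ν_k(δ̄)` among the rows `δ̄` of `T` -/
def rnum (k : ℕ) (T : Table 2) : ℕ := (T.rows.image (nuk k)).card

end

/-! For each node `j`, membership `j ∈ ν_k(δ̄)` is a conjunction of at most three conditions
`δ_i = b`, so the `m(k) + 1` decision rules "these conditions ⇒ decision `j`" are all true for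
`T_k`. They also cover `T_k`, because `ν_k(δ̄)` is never empty: if `δ_1 = 1`, the
highest-numbered node `j` with `δ_j = 1` lies in the last layer or has both children
(which have larger numbers) labelled `0`. A rule system that is true for a table and covers it
is a nondeterministic decision tree with one single-path branch per rule, and here every
branch has depth at most `3`. -/

namespace DTree

variable {k : ℕ}

def chain : List (ℕ × ℕ) → ℕ → DTree k
  | [], d => leaf d
  | (a, v) :: α, d => node a 0 (fun _ => v) (fun _ => chain α d)

theorem paths_chain (α : List (ℕ × ℕ)) (d : ℕ) : (chain α d : DTree k).paths = {(α, d)} := by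
  induction α with
  | nil => rfl
  | cons q α ih =>
    ext p
    simp only [chain, paths, ih, Set.mem_iUnion, Set.mem_image, Set.mem_singleton_iff]
    constructor
    · rintro ⟨_, _, rfl, rfl⟩
      rfl
    · rintro rfl
      exact ⟨0, (α, d), rfl, rfl⟩

theorem wf_chain {α : List (ℕ × ℕ)} (h : ∀ q ∈ α, q.2 < k) (d : ℕ) :
    (chain α d : DTree k).wf := by
  induction α with
  | nil => trivial
  | cons q α ih =>
    simp only [List.mem_cons, forall_eq_or_imp] at h
    exact ⟨fun _ => h.1, fun _ => ih h.2⟩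

theorem attrs_chain (α : List (ℕ × ℕ)) (d : ℕ) :
    (chain α d : DTree k).attrs = (α.map Prod.fst).toFinset := by
  induction α with
  | nil => rfl
  | cons q α ih => simp [chain, attrs, ih]

end DTree

namespace KTree

variable {k : ℕ}

def ofRules {n : ℕ} (rule : Fin (n + 1) → List (ℕ × ℕ) × ℕ) : KTree k :=
  ⟨n, fun i => DTree.chain (rule i).1 (rule i).2⟩

theorem paths_ofRules {n : ℕ} (rule : Fin (n + 1) → List (ℕ × ℕ) × ℕ) :
    (ofRules rule : KTree k).paths = Set.range rule := by
  simp [paths, ofRules, DTree.paths_chain, Set.range, eq_comm]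

end KTree

section Rules

variable {k n : ℕ}

theorem isNDT_ofRules {T : Table k} {rule : Fin (n + 1) → List (ℕ × ℕ) × ℕ}
    (hne : T.rows.Nonempty) (hok : ∀ i, T.wordOk (rule i).1)
    (hcover : ∀ r ∈ T.rows, ∃ i, Table.rowSat r (rule i).1)
    (htrue : ∀ i, ∀ r ∈ T.rows, Table.rowSat r (rule i).1 → (rule i).2 ∈ T.dec r) :
    isNDT T (KTree.ofRules rule) := by
  refine ⟨hne, fun i => DTree.wf_chain (fun q hq => (hok i q hq).2) _, ?_, ?_, ?_⟩
  · intro x hx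
    simp only [KTree.attrs, KTree.ofRules, DTree.attrs_chain, Finset.mem_biUnion,
      List.mem_toFinset, List.mem_map] at hx
    obtain ⟨i, -, q, hq, rfl⟩ := hx
    exact (hok i q hq).1
  · intro r hr
    obtain ⟨i, hi⟩ := hcover r hr
    exact ⟨rule i, (KTree.paths_ofRules rule).symm ▸ ⟨i, rfl⟩, hi⟩
  · rw [KTree.paths_ofRules]
    rintro _ ⟨i, rfl⟩
    right
    intro r hr
    obtain ⟨hrT, hsat⟩ := Finset.mem_filter.1 hr
    exact htrue i r hrT hsat

theorem treeComp_ofRules_le (ψ : PBCM) {rule : Fin (n + 1) → List (ℕ × ℕ) × ℕ} {c : ℕ}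
    (hc : ∀ i, ψ.onWord (rule i).1 ≤ c) : treeComp ψ (KTree.ofRules rule : KTree k) ≤ c := by
  apply csSup_le'
  rintro _ ⟨p, hp, rfl⟩
  rw [KTree.paths_ofRules] at hp
  obtain ⟨i, rfl⟩ := hp
  exact hc i

theorem psiA_le_of_rules (ψ : PBCM) {T : Table k} {rule : Fin (n + 1) → List (ℕ × ℕ) × ℕ}
    {c : ℕ} (hne : T.rows.Nonempty) (hok : ∀ i, T.wordOk (rule i).1)
    (hcover : ∀ r ∈ T.rows, ∃ i, Table.rowSat r (rule i).1)
    (htrue : ∀ i, ∀ r ∈ T.rows, Table.rowSat r (rule i).1 → (rule i).2 ∈ T.dec r)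
    (hc : ∀ i, ψ.onWord (rule i).1 ≤ c) : psiA ψ T ≤ c :=
  calc psiA ψ T ≤ treeComp ψ (KTree.ofRules rule) :=
        Nat.sInf_le ⟨_, isNDT_ofRules hne hok hcover htrue, rfl⟩
    _ ≤ c := treeComp_ofRules_le ψ hc

end Rules

theorem allRows_nonempty {k : ℕ} (hk : 0 < k) (s : Finset ℕ) : (allRows k s).Nonempty :=
  (Finset.pi_nonempty.2 fun _ _ => Finset.nonempty_range_iff.2 hk.ne').image _

theorem mnum_succ (L : ℕ) : mnum (L + 1) = mnum L + (L + 1) := by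
  unfold mnum
  rw [show (L + 1) * (L + 1 + 1) = L * (L + 1) + (L + 1) * 2 by ring,
    Nat.add_mul_div_right _ _ two_pos]

theorem mnum_mono : Monotone mnum :=
  monotone_nat_of_le_succ fun L => by rw [mnum_succ]; omega

theorem self_le_mnum (i : ℕ) : i ≤ mnum i := by
  unfold mnum
  rw [Nat.le_div_iff_mul_le two_pos]
  rcases i with _ | i
  · rfl
  · nlinarith

theorem le_mnum_layer (i : ℕ) : i ≤ mnum (layer i) :=
  Nat.sInf_mem (s := {L | i ≤ mnum L}) ⟨i, self_le_mnum i⟩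

theorem layer_le {i L : ℕ} (h : i ≤ mnum L) : layer i ≤ L := Nat.sInf_le h

theorem layer_pos {i : ℕ} (hi : 1 ≤ i) : 1 ≤ layer i := by
  by_contra h0
  have := le_mnum_layer i
  rw [show layer i = 0 by omega] at this
  simp [mnum] at this
  omega

theorem one_le_mnum {k : ℕ} (hk : 1 ≤ k) : 1 ≤ mnum k :=
  (self_le_mnum 1).trans (mnum_mono hk)

theorem rchild_le_mnum_layer_succ (i : ℕ) : rchild i ≤ mnum (layer i + 1) := by
  have := le_mnum_layer i
  rw [mnum_succ, rchild]
  omega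

theorem lchild_rchild_bounds {k j : ℕ} (hj0 : 1 ≤ j) (hj : j ≤ mnum k) (hl : layer j ≠ k) :
    j < lchild j ∧ lchild j < rchild j ∧ rchild j ≤ mnum k := by
  have hpos := layer_pos hj0
  have hr := (rchild_le_mnum_layer_succ j).trans
    (mnum_mono (show layer j + 1 ≤ k by have := layer_le hj; omega))
  unfold lchild rchild at *
  omega

noncomputable def nukWord (k j : ℕ) : List (ℕ × ℕ) :=
  if j = 0 then [(1, 0)]
  else if layer j = k then [(j, 1)]
  else [(j, 1), (lchild j, 0), (rchild j, 0)]

theorem length_nukWord_le (k j : ℕ) : (nukWord k j).length ≤ 3 := by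
  unfold nukWord
  split_ifs <;> simp

theorem mem_nuk_iff {k j : ℕ} {δ : ℕ → ℕ} :
    j ∈ nuk k δ ↔ j ≤ mnum k ∧ Table.rowSat δ (nukWord k j) := by
  unfold nuk nukWord
  simp only [Finset.mem_filter, Finset.mem_range, Nat.lt_succ_iff]
  split_ifs <;> simp [Table.rowSat]

theorem wordOk_nukWord {k j : ℕ} (hk : 1 ≤ k) (hj : j ≤ mnum k) :
    (Tk k).wordOk (nukWord k j) := by
  have h1 := one_le_mnum hk
  show ∀ q ∈ nukWord k j, q.1 ∈ Finset.Icc 1 (mnum k) ∧ q.2 < 2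
  unfold nukWord
  split_ifs with hj0 hl
  · simpa using h1
  · simp only [List.mem_singleton, forall_eq, Finset.mem_Icc]
    omega
  · have := lchild_rchild_bounds (by omega) hj hl
    simp only [List.mem_cons, List.not_mem_nil, or_false, forall_eq_or_imp,
      forall_eq, Finset.mem_Icc]
    omega

theorem nuk_nonempty {k : ℕ} (hk : 1 ≤ k) {δ : ℕ → ℕ}
    (hδ : ∀ i ∈ Finset.Icc 1 (mnum k), δ i < 2) : (nuk k δ).Nonempty := by
  by_cases h1 : δ 1 = 0
  · exact ⟨0, mem_nuk_iff.2 ⟨Nat.zero_le _, by simpa [nukWord, Table.rowSat] using h1⟩⟩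
  set S := (Finset.Icc 1 (mnum k)).filter fun i => δ i = 1
  have hS : S.Nonempty := by
    have h1k := one_le_mnum hk
    have := hδ 1 (Finset.mem_Icc.2 ⟨le_rfl, h1k⟩)
    exact ⟨1, Finset.mem_filter.2 ⟨Finset.mem_Icc.2 ⟨le_rfl, h1k⟩, by omega⟩⟩
  obtain ⟨hjI, hj1⟩ := Finset.mem_filter.1 (S.max'_mem hS)
  set j := S.max' hS
  obtain ⟨hj0, hjk⟩ := Finset.mem_Icc.1 hjI
  have hzero : ∀ i, j < i → i ≤ mnum k → δ i = 0 := by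
    intro i hji hik
    have hiI : i ∈ Finset.Icc 1 (mnum k) := Finset.mem_Icc.2 ⟨by omega, hik⟩
    have hi1 : δ i ≠ 1 := fun h => absurd (S.le_max' i (Finset.mem_filter.2 ⟨hiI, h⟩)) (by omega)
    have := hδ i hiI
    omega
  refine ⟨j, mem_nuk_iff.2 ⟨hjk, ?_⟩⟩
  unfold nukWord
  split_ifs with hj00 hl
  · omega
  · simpa [Table.rowSat] using hj1
  · obtain ⟨hl1, hl2, hl3⟩ := lchild_rchild_bounds hj0 hjk hl
    simp [Table.rowSat, hj1, hzero _ hl1 (by omega), hzero _ (by omega) hl3]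

theorem Tk_dec_eq {k : ℕ} (hk : 1 ≤ k) {r : ℕ → ℕ} (hr : r ∈ (Tk k).rows) :
    (Tk k).dec r = nuk k r :=
  if_pos (nuk_nonempty hk ((Tk k).rows_mem r hr).1)

/-- **Lemma (7M4).** For any `k ≥ 1`, `h^a(T_k) ≤ 3`. -/
theorem stmt10 (k : ℕ) (hk : 1 ≤ k) : psiA depthCM.toPBCM (Tk k) ≤ 3 := by
  refine psiA_le_of_rules depthCM.toPBCM (rule := fun j : Fin (mnum k + 1) => (nukWord k j, j))
    (allRows_nonempty two_pos _) (fun j => wordOk_nukWord hk j.is_le) ?cover ?true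
    (fun j => (List.length_map _).trans_le (length_nukWord_le k j))
  case cover =>
    intro r hr
    obtain ⟨j, hj⟩ := nuk_nonempty hk ((Tk k).rows_mem r hr).1
    obtain ⟨hjk, hsat⟩ := mem_nuk_iff.1 hj
    exact ⟨⟨j, Nat.lt_succ_iff.2 hjk⟩, hsat⟩
  case true =>
    intro j r hr hsat
    rw [Tk_dec_eq hk hr]
    exact mem_nuk_iff.2 ⟨j.is_le, hsat⟩
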